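/- arXiv:2108.09831 — 6 statements merged into one kernel-verified Lean document; each statement's English description precedes it below -/
import Mathlib

section
/- A tuple z : Fin N → Ṽ satisfies (z, η)_H = 0 for all η ∈ T_φ if and only if z = φS for some symmetric matrix S ∈ ℝ^{N×N}; that is, the H-orthogonal complement of the tangent space T_φ within Ṽ^N equals {φS : S ∈ ℝ^{N×N} symmetric}. -/
open scoped RealInnerProductSpace

/-- The outer product `⟦v,w⟧ ∈ ℝ^{N×N}` of two tuples, with entries `⟨v i, w j⟩`. -/
noncomputable def outerProd {N : ℕ} {H₀ : Type*} [NormedAddCommGroup H₀]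
    [InnerProductSpace ℝ H₀] (v w : Fin N → H₀) : Matrix (Fin N) (Fin N) ℝ :=
  Matrix.of fun i j => ⟪v i, w j⟫

/-- Multiplication of a tuple by a matrix from the right: `(vS)_j = Σ_i S_{ij} v_i`. -/
def smulMat {N : ℕ} {H₀ : Type*} [AddCommGroup H₀] [Module ℝ H₀]
    (v : Fin N → H₀) (S : Matrix (Fin N) (Fin N) ℝ) : Fin N → H₀ :=
  fun j => ∑ i, S i j • v i

/-- The inner product `(v,w)_H = Σ_j ⟨v_j, w_j⟩ = tr⟦v,w⟧`. -/
noncomputable def innerH {N : ℕ} {H₀ : Type*} [NormedAddCommGroup H₀]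
    [InnerProductSpace ℝ H₀] (v w : Fin N → H₀) : ℝ :=
  ∑ j, ⟪v j, w j⟫

lemma sum_stdBasis_mul {N : ℕ} (a b : Fin N) (c : Fin N → Fin N → ℝ) :
    ∑ j, ∑ k, Matrix.single a b (1:ℝ) k j * c k j = c a b := by
  rw [Finset.sum_comm]
  simp [Matrix.single, ite_and, ite_mul, Finset.sum_ite_eq]

lemma std_anti {N : ℕ} (a b i j : Fin N) :
    (Matrix.single a b (1:ℝ) - Matrix.single b a 1 : Matrix (Fin N) (Fin N) ℝ) i j
    + (Matrix.single a b (1:ℝ) - Matrix.single b a 1 : Matrix (Fin N) (Fin N) ℝ) j i = 0 := by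
  simp only [Matrix.sub_apply, Matrix.single, Matrix.of_apply]
  split_ifs <;> (try norm_num) <;> tauto

/-- a tuple `z` with components in `Ṽ` is `H`-orthogonal to the tangent
space `T_φ` (taken within `Ṽ^N`) if and only if `z = φ S` for some symmetric matrix `S`. -/
theorem normalSpace_H_characterization {N : ℕ} (hN : 1 ≤ N) {H₀ : Type*}
    [NormedAddCommGroup H₀] [InnerProductSpace ℝ H₀]
    (V : Submodule ℝ H₀)
    (φ : Fin N → H₀) (hφmem : ∀ i, φ i ∈ V) (hφ : outerProd φ φ = 1)
    (z : Fin N → H₀) (hzmem : ∀ i, z i ∈ V) :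
    (∀ η : Fin N → H₀, (∀ i, η i ∈ V) →
        outerProd η φ + outerProd φ η = 0 → innerH z η = 0) ↔
      ∃ S : Matrix (Fin N) (Fin N) ℝ, S.IsSymm ∧ z = smulMat φ S := by
  have hφφ : ∀ i j, ⟪φ i, φ j⟫ = if i = j then (1:ℝ) else 0 := by
    intro i j
    have := congrFun (congrFun hφ i) j
    simpa [outerProd, Matrix.one_apply] using this
  constructor
  · intro h
    set S : Matrix (Fin N) (Fin N) ℝ := Matrix.of fun i j => ⟪φ i, z j⟫ with hS
    set w : Fin N → H₀ := fun j => z j - ∑ i, S i j • φ i with hw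
    have hwφ : ∀ k j, ⟪φ k, w j⟫ = 0 := by
      intro k j
      simp [hw, inner_sub_right, inner_sum, inner_smul_right, hφφ, hS]
    have hwmem : ∀ i, w i ∈ V := fun i =>
      Submodule.sub_mem _ (hzmem i)
        (Submodule.sum_mem _ fun k _ => Submodule.smul_mem _ _ (hφmem k))
    have hwant : outerProd w φ + outerProd φ w = 0 := by
      ext i j
      have h1 : ⟪w i, φ j⟫ = 0 := by rw [real_inner_comm]; exact hwφ j i
      simp [outerProd, hwφ, h1]
    have hzw := h w hwmem hwant
    have hw0 : ∀ j, w j = 0 := by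
      have hterm : ∀ j, ⟪z j, w j⟫ = ⟪w j, w j⟫ := by
        intro j
        have hz : z j = w j + ∑ i, S i j • φ i := by simp [hw]
        rw [hz, inner_add_left]
        have : ⟪∑ i, S i j • φ i, w j⟫ = 0 := by
          simp [sum_inner, inner_smul_left, hwφ]
        simp [this]
      have hsum : ∑ j, ⟪w j, w j⟫ = 0 := by
        rw [← Finset.sum_congr rfl fun j _ => hterm j]
        exact hzw
      intro j
      have hz : ⟪w j, w j⟫ = 0 :=
        (Finset.sum_eq_zero_iff_of_nonneg
          (fun i _ => real_inner_self_nonneg)).mp hsum j (Finset.mem_univ j)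
      exact inner_self_eq_zero.mp hz
    have hzS : z = smulMat φ S := by
      funext j
      have := sub_eq_zero.mp (hw0 j)
      simpa [smulMat] using this
    refine ⟨S, ?_, hzS⟩
    ext a b
    set A : Matrix (Fin N) (Fin N) ℝ :=
      Matrix.single a b 1 - Matrix.single b a 1 with hA
    have hAanti : ∀ i j, A i j + A j i = 0 := fun i j => std_anti a b i j
    set η : Fin N → H₀ := smulMat φ A with hη
    have hηmem : ∀ i, η i ∈ V := fun i =>
      Submodule.sum_mem _ fun k _ => Submodule.smul_mem _ _ (hφmem k)
    have hηφ : ∀ i j, ⟪η i, φ j⟫ = A j i := by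
      intro i j
      simp [hη, smulMat, sum_inner, inner_smul_left, hφφ]
    have hφη : ∀ i j, ⟪φ i, η j⟫ = A i j := by
      intro i j
      rw [real_inner_comm]; exact hηφ j i
    have hT : outerProd η φ + outerProd φ η = 0 := by
      ext i j
      simp only [Matrix.add_apply, outerProd, Matrix.of_apply, Matrix.zero_apply,
        hηφ, hφη]
      have := hAanti j i
      linarith
    have hzη := h η hηmem hT
    have hcalc : innerH z η = S a b - S b a := by
      have hterm : ∀ j, ⟪z j, η j⟫ = ∑ k, A k j * ⟪φ k, z j⟫ := by
        intro j
        rw [hη]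
        simp only [smulMat, inner_sum, inner_smul_right]
        congr 1
        funext k
        rw [real_inner_comm]
      rw [innerH, Finset.sum_congr rfl fun j _ => hterm j]
      simp only [hA, Matrix.sub_apply, sub_mul, Finset.sum_sub_distrib]
      rw [sum_stdBasis_mul a b (fun k j => ⟪φ k, z j⟫),
        sum_stdBasis_mul b a (fun k j => ⟪φ k, z j⟫)]
      simp [hS]
    have hfin : S a b - S b a = 0 := by rw [← hcalc]; exact hzη
    simp only [Matrix.transpose_apply]
    linarith
  · rintro ⟨S, hSsymm, rfl⟩ η _ hT
    have hAanti : ∀ i j, ⟪φ i, η j⟫ + ⟪φ j, η i⟫ = 0 := by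
      intro i j
      have h0 := congrFun (congrFun hT j) i
      simp only [Matrix.add_apply, outerProd, Matrix.of_apply, Matrix.zero_apply] at h0
      have h1 := real_inner_comm (η j) (φ i)
      linarith
    have hexp : innerH (smulMat φ S) η = ∑ j, ∑ i, S i j * ⟪φ i, η j⟫ := by
      simp [innerH, smulMat, sum_inner, inner_smul_left]
    rw [hexp]
    have hsymm : ∀ i j, S i j = S j i := fun i j => hSsymm.apply j i
    have key : (∑ j, ∑ i, S i j * ⟪φ i, η j⟫) = - ∑ j, ∑ i, S i j * ⟪φ i, η j⟫ := by
      conv_lhs => rw [Finset.sum_comm]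
      rw [← Finset.sum_neg_distrib]
      refine Finset.sum_congr rfl fun j _ => ?_
      rw [← Finset.sum_neg_distrib]
      refine Finset.sum_congr rfl fun i _ => ?_
      have h1 := hAanti i j
      have h3 : ⟪φ j, η i⟫ = -⟪φ i, η j⟫ := by linarith
      rw [h3, hsymm j i]
      ring
    linarith
end

section
/- The family {φ^{ij} : 1 ≤ i ≤ j ≤ N} is orthonormal with respect to the inner product (·,·)_H, and its linear span equals the H-orthogonal complement {z : Fin N → Ṽ | (z, η)_H = 0 for all η ∈ T_φ} of the tangent space; in particular it is an orthonormal basis of this complement. -/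
open scoped RealInnerProductSpace

/-- The normalized symmetric matrices `S^{ij}`: `S^{ii} = e_i e_iᵀ` and, for `i ≠ j`,
`S^{ij} = (e_i e_jᵀ + e_j e_iᵀ)/√2`. -/
noncomputable def SijMat {N : ℕ} (i j : Fin N) : Matrix (Fin N) (Fin N) ℝ :=
  if i = j then Matrix.single i i 1
  else (Real.sqrt 2)⁻¹ • (Matrix.single i j 1 + Matrix.single j i 1)

/-! The map `A ↦ φA` satisfies `⟦φ, φA⟧ = A`, so it carries the Frobenius inner product
`Σ A_ab B_ab` to `(·,·)_H`; orthonormality thus reduces to that of the `S^{ij}`, and these span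
the symmetric matrices. A tuple `η` is tangent exactly when `⟦φ,η⟧` is antisymmetric, so
`(φA, η)_H = Σ A_ab ⟦φ,η⟧_ab` vanishes for symmetric `A`. Conversely, if `z` is normal and `P` is
the symmetric part of `⟦φ,z⟧`, then `η := z - φP` is tangent and orthogonal to both `z` and `φP`,
so `(η,η)_H = 0` and `z = φP`. -/

open Matrix

section SymmetricMatrices

def symmetricSubmodule (n R : Type*) [Semiring R] : Submodule R (Matrix n n R) where
  carrier := {A | A.IsSymm}
  add_mem' := IsSymm.add
  zero_mem' := isSymm_zero
  smul_mem' c _ hA := hA.smul c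

variable {n : Type*}

lemma eq_sum_smul_single_add_single_of_isSymm [Fintype n] [DecidableEq n] {A : Matrix n n ℝ}
    (hA : A.IsSymm) : A = ∑ a, ∑ b, (A a b / 2) • (single a b 1 + single b a 1) := by
  ext i j
  simp [Matrix.sum_apply, single_apply, ite_and, Finset.sum_add_distrib, hA.apply]

lemma sum_mul_eq_zero_of_isSymm_of_transpose_eq_neg [Fintype n] {A M : Matrix n n ℝ}
    (hA : A.IsSymm) (hM : Mᵀ = -M) : ∑ a, ∑ b, A a b * M a b = 0 := by
  have hM' (a b : n) : M b a = -M a b := congr_fun₂ hM a b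
  have hswap : ∑ a, ∑ b, A a b * M a b = -∑ a, ∑ b, A a b * M a b := calc
    ∑ a, ∑ b, A a b * M a b = ∑ a, ∑ b, A b a * M b a := by rw [Finset.sum_comm]
    _ = ∑ a, ∑ b, -(A a b * M a b) := by
      refine Finset.sum_congr rfl fun a _ => Finset.sum_congr rfl fun b _ => ?_
      rw [hA.apply, hM', mul_neg]
    _ = -∑ a, ∑ b, A a b * M a b := by simp only [Finset.sum_neg_distrib]
  linarith

end SymmetricMatrices

section SijMat

variable {N : ℕ}

lemma SijMat_apply (i j a b : Fin N) :
    SijMat i j a b = if i = j then (if i = a ∧ i = b then 1 else 0)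
      else (√2)⁻¹ * ((if i = a ∧ j = b then 1 else 0) + if j = a ∧ i = b then 1 else 0) := by
  unfold SijMat
  split_ifs <;> simp only [single_apply, Matrix.smul_apply, Matrix.add_apply, smul_eq_mul] <;>
    grind

lemma SijMat_comm (i j : Fin N) : SijMat i j = SijMat j i := by
  ext a b
  simp only [SijMat_apply]
  grind

lemma SijMat_isSymm (i j : Fin N) : (SijMat i j).IsSymm :=
  IsSymm.ext fun a b => by simp only [SijMat_apply]; grind

lemma sum_SijMat_mul (i j : Fin N) (M : Matrix (Fin N) (Fin N) ℝ) :
    ∑ a, ∑ b, SijMat i j a b * M a b =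
      if i = j then M i i else (√2)⁻¹ * (M i j + M j i) := by
  simp only [SijMat_apply]
  split_ifs <;> simp [ite_and, add_mul, mul_add, Finset.sum_add_distrib]

lemma sum_SijMat_mul_SijMat {i j k l : Fin N} (hij : i ≤ j) (hkl : k ≤ l) :
    ∑ a, ∑ b, SijMat i j a b * SijMat k l a b = if i = k ∧ j = l then 1 else 0 := by
  have h2 : (√2)⁻¹ * (√2)⁻¹ * 2 = (1 : ℝ) := by
    rw [← mul_inv, Real.mul_self_sqrt zero_le_two, inv_mul_cancel₀ two_ne_zero]
  rw [sum_SijMat_mul, SijMat_apply, SijMat_apply, SijMat_apply]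
  split_ifs <;> grind

lemma single_add_single_eq_smul_SijMat (i j : Fin N) :
    single i j (1 : ℝ) + single j i 1 = (if i = j then 2 else √2) • SijMat i j := by
  unfold SijMat
  split_ifs with h
  · rw [h, two_smul]
  · rw [smul_smul, mul_inv_cancel₀ (by positivity), one_smul]

lemma span_SijMat :
    Submodule.span ℝ {S | ∃ i j : Fin N, i ≤ j ∧ S = SijMat i j} =
      symmetricSubmodule (Fin N) ℝ := by
  refine le_antisymm (Submodule.span_le.2 ?_) fun A hA => ?_
  · rintro _ ⟨i, j, -, rfl⟩
    exact SijMat_isSymm i j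
  have hmem (i j : Fin N) :
      SijMat i j ∈ Submodule.span ℝ {S | ∃ i j : Fin N, i ≤ j ∧ S = SijMat i j} := by
    rcases le_total i j with h | h
    · exact Submodule.subset_span ⟨i, j, h, rfl⟩
    · exact Submodule.subset_span ⟨j, i, h, SijMat_comm i j⟩
  rw [eq_sum_smul_single_add_single_of_isSymm hA]
  refine Submodule.sum_mem _ fun a _ => Submodule.sum_mem _ fun b _ => Submodule.smul_mem _ _ ?_
  rw [single_add_single_eq_smul_SijMat]
  exact Submodule.smul_mem _ _ (hmem a b)

end SijMat

section SmulMat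

variable {N : ℕ} {M : Type*} [AddCommGroup M] [Module ℝ M]

def smulMatLin (φ : Fin N → M) : Matrix (Fin N) (Fin N) ℝ →ₗ[ℝ] (Fin N → M) where
  toFun := smulMat φ
  map_add' A B := by
    funext j
    simp only [smulMat, Pi.add_apply, Matrix.add_apply, add_smul, Finset.sum_add_distrib]
  map_smul' c A := by
    funext j
    simp only [smulMat, Pi.smul_apply, Matrix.smul_apply, smul_eq_mul, mul_smul,
      Finset.smul_sum, RingHom.id_apply]

lemma smulMat_apply_mem {V : Submodule ℝ M} {φ : Fin N → M} (hφV : ∀ i, φ i ∈ V)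
    (A : Matrix (Fin N) (Fin N) ℝ) (j : Fin N) : smulMat φ A j ∈ V :=
  V.sum_mem fun i _ => V.smul_mem _ (hφV i)

lemma span_smulMat_SijMat (φ : Fin N → M) :
    Submodule.span ℝ {x | ∃ i j : Fin N, i ≤ j ∧ x = smulMat φ (SijMat i j)} =
      (symmetricSubmodule (Fin N) ℝ).map (smulMatLin φ) := by
  rw [← span_SijMat, ← Submodule.span_image]
  congr 1
  ext x
  simp [smulMatLin, eq_comm]

end SmulMat

section Frame

variable {N : ℕ} {H₀ : Type*} [NormedAddCommGroup H₀] [InnerProductSpace ℝ H₀]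

lemma outerProd_transpose (v w : Fin N → H₀) : (outerProd v w)ᵀ = outerProd w v := by
  ext i j
  exact real_inner_comm _ _

lemma outerProd_sub_right (v w w' : Fin N → H₀) :
    outerProd v (w - w') = outerProd v w - outerProd v w' := by
  ext i j
  exact inner_sub_right _ _ _

lemma outerProd_smulMat_right {φ : Fin N → H₀} (hφ : outerProd φ φ = 1)
    (A : Matrix (Fin N) (Fin N) ℝ) : outerProd φ (smulMat φ A) = A := by
  ext i j
  have hφi (a : Fin N) : ⟪φ i, φ a⟫ = (1 : Matrix (Fin N) (Fin N) ℝ) i a := congr_fun₂ hφ i a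
  simp [outerProd, smulMat, inner_sum, real_inner_smul_right, hφi, one_apply]

lemma innerH_sub_left (v v' w : Fin N → H₀) :
    innerH (v - v') w = innerH v w - innerH v' w := by
  simp only [innerH, Pi.sub_apply, inner_sub_left, Finset.sum_sub_distrib]

lemma innerH_self_eq_zero {v : Fin N → H₀} : innerH v v = 0 ↔ v = 0 := by
  simp only [innerH, Finset.sum_eq_zero_iff_of_nonneg fun j _ => real_inner_self_nonneg,
    Finset.mem_univ, true_implies, inner_self_eq_zero, funext_iff, Pi.zero_apply]

lemma innerH_smulMat_left (φ : Fin N → H₀) (A : Matrix (Fin N) (Fin N) ℝ) (η : Fin N → H₀) :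
    innerH (smulMat φ A) η = ∑ a, ∑ b, A a b * outerProd φ η a b := by
  simp only [innerH, smulMat, sum_inner, real_inner_smul_left, outerProd, of_apply]
  exact Finset.sum_comm

lemma innerH_smulMat_smulMat {φ : Fin N → H₀} (hφ : outerProd φ φ = 1)
    (A B : Matrix (Fin N) (Fin N) ℝ) :
    innerH (smulMat φ A) (smulMat φ B) = ∑ a, ∑ b, A a b * B a b := by
  rw [innerH_smulMat_left, outerProd_smulMat_right hφ]

lemma innerH_smulMat_eq_zero_of_tangent {φ η : Fin N → H₀} {A : Matrix (Fin N) (Fin N) ℝ}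
    (hA : A.IsSymm) (hη : outerProd η φ + outerProd φ η = 0) :
    innerH (smulMat φ A) η = 0 := by
  rw [innerH_smulMat_left]
  refine sum_mul_eq_zero_of_isSymm_of_transpose_eq_neg hA ?_
  rw [outerProd_transpose]
  exact eq_neg_of_add_eq_zero_left hη

lemma eq_smulMat_symmPart_of_normal {V : Submodule ℝ H₀} {φ z : Fin N → H₀}
    (hφV : ∀ i, φ i ∈ V) (hφ : outerProd φ φ = 1) (hzV : ∀ i, z i ∈ V)
    (hz : ∀ η : Fin N → H₀, (∀ i, η i ∈ V) →
      outerProd η φ + outerProd φ η = 0 → innerH z η = 0) :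
    z = smulMat φ ((1 / 2 : ℝ) • (outerProd φ z + (outerProd φ z)ᵀ)) := by
  set B := outerProd φ z
  set P := (1 / 2 : ℝ) • (B + Bᵀ)
  have hP : P.IsSymm := (isSymm_add_transpose_self B).smul _
  set η := z - smulMat φ P
  have hηV : ∀ i, η i ∈ V := fun i => V.sub_mem (hzV i) (smulMat_apply_mem hφV P i)
  have hφη : outerProd φ η = B - P := by
    rw [outerProd_sub_right, outerProd_smulMat_right hφ]
  have hη : outerProd η φ + outerProd φ η = 0 := by
    rw [← outerProd_transpose φ η, hφη]
    simp only [P, transpose_sub, transpose_smul, transpose_add, transpose_transpose]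
    module
  have hηη : innerH η η = 0 := by
    rw [innerH_sub_left, hz η hηV hη, innerH_smulMat_eq_zero_of_tangent hP hη, sub_zero]
  exact sub_eq_zero.1 (innerH_self_eq_zero.1 hηη)

end Frame

theorem phiSij_orthonormal_basis_of_normal_space_general {N : ℕ} {H₀ : Type*}
    [NormedAddCommGroup H₀] [InnerProductSpace ℝ H₀]
    (V : Submodule ℝ H₀)
    (φ : Fin N → H₀) (hφmem : ∀ i, φ i ∈ V) (hφ : outerProd φ φ = 1) :
    (∀ i j k l : Fin N, i ≤ j → k ≤ l →
      innerH (smulMat φ (SijMat i j)) (smulMat φ (SijMat k l)) =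
        if i = k ∧ j = l then 1 else 0) ∧
    ((Submodule.span ℝ
        {x : Fin N → H₀ | ∃ i j : Fin N, i ≤ j ∧ x = smulMat φ (SijMat i j)} :
        Set (Fin N → H₀)) =
      {z : Fin N → H₀ | (∀ i, z i ∈ V) ∧
        ∀ η : Fin N → H₀, (∀ i, η i ∈ V) →
          outerProd η φ + outerProd φ η = 0 → innerH z η = 0}) := by
  refine ⟨fun i j k l hij hkl => ?_, ?_⟩
  · rw [innerH_smulMat_smulMat hφ, sum_SijMat_mul_SijMat hij hkl]
  rw [span_smulMat_SijMat]
  ext z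
  constructor
  · rintro ⟨A, hA, rfl⟩
    exact ⟨smulMat_apply_mem hφmem A, fun η _ hη => innerH_smulMat_eq_zero_of_tangent hA hη⟩
  · rintro ⟨hzV, hz⟩
    exact ⟨_, (isSymm_add_transpose_self _).smul _,
      (eq_smulMat_symmPart_of_normal hφmem hφ hzV hz).symm⟩

/-- the family `φ^{ij} = φ S^{ij}` (for `i ≤ j`) is `H`-orthonormal and its
span equals the `H`-orthogonal complement of the tangent space `T_φ` within `Ṽ^N`. -/
theorem phiSij_orthonormal_basis_of_normal_space {N : ℕ} (hN : 1 ≤ N) {H₀ : Type*}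
    [NormedAddCommGroup H₀] [InnerProductSpace ℝ H₀]
    (V : Submodule ℝ H₀)
    (φ : Fin N → H₀) (hφmem : ∀ i, φ i ∈ V) (hφ : outerProd φ φ = 1) :
    (∀ i j k l : Fin N, i ≤ j → k ≤ l →
      innerH (smulMat φ (SijMat i j)) (smulMat φ (SijMat k l)) =
        if i = k ∧ j = l then 1 else 0) ∧
    ((Submodule.span ℝ
        {x : Fin N → H₀ | ∃ i j : Fin N, i ≤ j ∧ x = smulMat φ (SijMat i j)} :
        Set (Fin N → H₀)) =
      {z : Fin N → H₀ | (∀ i, z i ∈ V) ∧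
        ∀ η : Fin N → H₀, (∀ i, η i ∈ V) →
          outerProd η φ + outerProd φ η = 0 → innerH z η = 0}) :=
  phiSij_orthonormal_basis_of_normal_space_general V φ hφmem hφ
end

section
/- If φ is an orthonormal N-frame and η ∈ T_φ, then ⟦φ+η, φ+η⟧ = I_N + ⟦η,η⟧, this matrix is symmetric positive definite, and consequently the components of φ+η are linearly independent in H₀. -/
open scoped RealInnerProductSpace

open Matrix

section OuterProd

variable {N : ℕ} {H₀ : Type*} [NormedAddCommGroup H₀] [InnerProductSpace ℝ H₀]

lemma outerProd_add_left (u v w : Fin N → H₀) :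
    outerProd (u + v) w = outerProd u w + outerProd v w :=
  Matrix.ext fun _ _ => inner_add_left _ _ _

lemma outerProd_add_right (u v w : Fin N → H₀) :
    outerProd u (v + w) = outerProd u v + outerProd u w :=
  Matrix.ext fun _ _ => inner_add_right _ _ _

lemma outerProd_self_eq_gram (v : Fin N → H₀) : outerProd v v = gram ℝ v := rfl

lemma outerProd_add_self_of_tangent {φ η : Fin N → H₀} (hφ : outerProd φ φ = 1)
    (hη : outerProd η φ + outerProd φ η = 0) :
    outerProd (φ + η) (φ + η) = 1 + outerProd η η :=
  calc outerProd (φ + η) (φ + η)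
      = outerProd φ φ + (outerProd η φ + outerProd φ η) + outerProd η η := by
        simp only [outerProd_add_left, outerProd_add_right]
        abel
    _ = 1 + outerProd η η := by rw [hφ, hη, add_zero]

lemma posDef_one_add_outerProd_self (v : Fin N → H₀) : (1 + outerProd v v).PosDef :=
  PosDef.one.add_posSemidef (outerProd_self_eq_gram v ▸ posSemidef_gram ℝ v)

lemma linearIndependent_of_posDef_outerProd_self {v : Fin N → H₀}
    (hv : (outerProd v v).PosDef) : LinearIndependent ℝ v :=
  linearIndependent_of_posDef_gram hv

end OuterProd

theorem outerProd_add_tangent_general {N : ℕ} {H₀ : Type*}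
    [NormedAddCommGroup H₀] [InnerProductSpace ℝ H₀]
    (φ η : Fin N → H₀) (hφ : outerProd φ φ = 1)
    (hη : outerProd η φ + outerProd φ η = 0) :
    outerProd (φ + η) (φ + η) = 1 + outerProd η η ∧
    (1 + outerProd η η).IsSymm ∧
    (1 + outerProd η η).PosDef ∧
    LinearIndependent ℝ (φ + η) := by
  have hSelf := outerProd_add_self_of_tangent hφ hη
  have hPos := posDef_one_add_outerProd_self η
  refine ⟨hSelf, isHermitian_iff_isSymm.mp hPos.isHermitian, hPos, ?_⟩
  exact linearIndependent_of_posDef_outerProd_self (hSelf ▸ hPos)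

/-- for an orthonormal frame `φ` and a tangent vector `η`,
`⟦φ+η, φ+η⟧ = I + ⟦η,η⟧` is symmetric positive definite, and the components of `φ+η`
are linearly independent. -/
theorem outerProd_add_tangent {N : ℕ} (hN : 1 ≤ N) {H₀ : Type*}
    [NormedAddCommGroup H₀] [InnerProductSpace ℝ H₀]
    (φ η : Fin N → H₀) (hφ : outerProd φ φ = 1)
    (hη : outerProd η φ + outerProd φ η = 0) :
    outerProd (φ + η) (φ + η) = 1 + outerProd η η ∧
    (1 + outerProd η η).IsSymm ∧
    (1 + outerProd η η).PosDef ∧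
    LinearIndependent ℝ (φ + η) :=
  outerProd_add_tangent_general φ η hφ hη
end

section
/- If φ is an orthonormal N-frame and η ∈ T_φ, then the curve c : ℝ → (Fin N → H₀) defined by c(t) := (φ+tη)·(I_N + t²⟦η,η⟧)^{-1/2} satisfies c(0) = φ and has derivative c'(0) = η at t = 0 (derivative taken in the product inner product space (Fin N → H₀, (·,·)_H)). -/
/-!
With `S = Sq t` one has `S⁻¹ - 1 = -t² S⁻¹ (1 + S)⁻¹ ⟦η,η⟧`, since `S` commutes with itself and
`S² - 1 = t²⟦η,η⟧`. Because `S ≥ 0` and `S² ≥ 1`, both `S⁻¹` and `(1 + S)⁻¹` are Euclidean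
contractions, so every entry of `(Sq t)⁻¹ - 1` is `O(t²)`. Hence `t ↦ (Sq t)⁻¹` equals `1` at
`t = 0` with derivative `0` there, and the product rule for `(v, M) ↦ v M` gives `c(0) = φ` and
`c'(0) = η`.
-/

open scoped RealInnerProductSpace

namespace Matrix

variable {n : Type*} [Fintype n]

lemma IsHermitian.mulVec_dotProduct_mulVec {S : Matrix n n ℝ} (hS : S.IsHermitian)
    (x : n → ℝ) :
    (S *ᵥ x) ⬝ᵥ (S *ᵥ x) = x ⬝ᵥ ((S * S) *ᵥ x) := by
  rw [← mulVec_mulVec, dotProduct_mulVec, ← mulVec_transpose,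
    ← conjTranspose_eq_transpose_of_trivial, hS.eq, dotProduct_comm]

lemma sq_apply_le_dotProduct_self (w : n → ℝ) (i : n) : w i ^ 2 ≤ w ⬝ᵥ w := by
  simpa only [dotProduct, sq] using
    Finset.single_le_sum (f := fun k => w k * w k) (fun k _ => mul_self_nonneg (w k))
      (Finset.mem_univ i)

lemma dotProduct_self_le_of_mul_self_eq_one_add [DecidableEq n] {S B : Matrix n n ℝ}
    (hS : S.IsHermitian) (hB : B.PosSemidef) (hSB : S * S = 1 + B) (x : n → ℝ) :
    x ⬝ᵥ x ≤ (S *ᵥ x) ⬝ᵥ (S *ᵥ x) := by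
  rw [hS.mulVec_dotProduct_mulVec, hSB, add_mulVec, one_mulVec, dotProduct_add]
  simpa using hB.dotProduct_mulVec_nonneg x

lemma PosSemidef.dotProduct_self_le_one_add [DecidableEq n] {S : Matrix n n ℝ}
    (hS : S.PosSemidef) (x : n → ℝ) :
    x ⬝ᵥ x ≤ ((1 + S) *ᵥ x) ⬝ᵥ ((1 + S) *ᵥ x) := by
  have hSx : 0 ≤ x ⬝ᵥ (S *ᵥ x) := by simpa using hS.dotProduct_mulVec_nonneg x
  have hSS : 0 ≤ (S *ᵥ x) ⬝ᵥ (S *ᵥ x) := by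
    simpa using dotProduct_star_self_nonneg (S *ᵥ x)
  rw [add_mulVec, one_mulVec, dotProduct_add, add_dotProduct, add_dotProduct,
    dotProduct_comm (S *ᵥ x) x]
  linarith

lemma dotProduct_self_inv_mulVec_le [DecidableEq n] {T : Matrix n n ℝ} (hT : IsUnit T)
    (h : ∀ y, y ⬝ᵥ y ≤ (T *ᵥ y) ⬝ᵥ (T *ᵥ y)) (x : n → ℝ) :
    (T⁻¹ *ᵥ x) ⬝ᵥ (T⁻¹ *ᵥ x) ≤ x ⬝ᵥ x := by
  simpa [mulVec_mulVec, mul_nonsing_inv _ ((isUnit_iff_isUnit_det T).1 hT)] using h (T⁻¹ *ᵥ x)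

lemma inv_sub_one_eq_neg_mul [DecidableEq n] {S B : Matrix n n ℝ} (hS : IsUnit S)
    (hS₁ : IsUnit (1 + S)) (hSB : S * S = 1 + B) : S⁻¹ - 1 = -(S⁻¹ * (1 + S)⁻¹ * B) := by
  have h : (1 + S) * (1 - S) = -B := by
    rw [show (1 + S) * (1 - S) = 1 - S * S by noncomm_ring, hSB]; abel
  have h' : 1 - S = (1 + S)⁻¹ * -B := by
    rw [← h, ← Matrix.mul_assoc, nonsing_inv_mul _ ((isUnit_iff_isUnit_det _).1 hS₁),
      Matrix.one_mul]
  calc S⁻¹ - 1 = S⁻¹ * (1 - S) := by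
        rw [Matrix.mul_sub, Matrix.mul_one, nonsing_inv_mul _ ((isUnit_iff_isUnit_det _).1 hS)]
    _ = _ := by rw [h', Matrix.mul_neg, Matrix.mul_neg, Matrix.mul_assoc]

lemma isUnit_of_mul_self_eq_one_add [DecidableEq n] {S B : Matrix n n ℝ}
    (hB : B.PosSemidef) (hSB : S * S = 1 + B) : IsUnit S := by
  have h := (isUnit_iff_isUnit_det _).1 ((PosDef.one.add_posSemidef hB).isUnit)
  rw [← hSB, det_mul] at h
  exact (isUnit_iff_isUnit_det _).2 (isUnit_of_mul_isUnit_left h)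

lemma sq_inv_sub_one_apply_le [DecidableEq n] {S B : Matrix n n ℝ} (hS : S.PosSemidef)
    (hB : B.PosSemidef) (hSB : S * S = 1 + B) (i j : n) :
    (S⁻¹ - 1) i j ^ 2 ≤ (B *ᵥ Pi.single j 1) ⬝ᵥ (B *ᵥ Pi.single j 1) := by
  have hS₀ : IsUnit S := isUnit_of_mul_self_eq_one_add hB hSB
  have hS₁ : IsUnit (1 + S) := (PosDef.one.add_posSemidef hS).isUnit
  have hcol : (S⁻¹ - 1) i j = -(S⁻¹ *ᵥ ((1 + S)⁻¹ *ᵥ (B *ᵥ Pi.single j 1))) i := by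
    rw [← col_apply (S⁻¹ - 1), ← mulVec_single_one, inv_sub_one_eq_neg_mul hS₀ hS₁ hSB,
      neg_mulVec, mulVec_mulVec, mulVec_mulVec, Pi.neg_apply]
  rw [hcol, neg_sq]
  have hS₀' :=
    dotProduct_self_inv_mulVec_le hS₀ (dotProduct_self_le_of_mul_self_eq_one_add hS.1 hB hSB)
  have hS₁' := dotProduct_self_inv_mulVec_le hS₁ hS.dotProduct_self_le_one_add
  exact (sq_apply_le_dotProduct_self _ i).trans <| (hS₀' _).trans (hS₁' _)

lemma abs_inv_sub_one_apply_le [DecidableEq n] {S A : Matrix n n ℝ} (hS : S.PosSemidef)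
    (hA : A.PosSemidef) {t : ℝ} (hSA : S * S = 1 + t ^ 2 • A) (i j : n) :
    |(S⁻¹ - 1) i j| ≤ t ^ 2 * √((A *ᵥ Pi.single j 1) ⬝ᵥ (A *ᵥ Pi.single j 1)) := by
  have h := sq_inv_sub_one_apply_le hS (hA.smul (sq_nonneg t)) hSA i j
  set w := A *ᵥ Pi.single j 1
  rw [smul_mulVec, smul_dotProduct, dotProduct_smul, smul_eq_mul, smul_eq_mul, ← mul_assoc,
    ← sq] at h
  have hw : 0 ≤ w ⬝ᵥ w := by simpa using dotProduct_star_self_nonneg w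
  rw [← Real.sqrt_sq (sq_nonneg t), ← Real.sqrt_mul' _ hw]
  exact Real.abs_le_sqrt h

lemma inv_sqrt_one_add_sq_smul_hasDerivAt_zero [DecidableEq n] {A : Matrix n n ℝ}
    (hA : A.PosSemidef) {Sq : ℝ → Matrix n n ℝ}
    (hSq : ∀ t : ℝ, (Sq t).PosSemidef ∧ Sq t * Sq t = 1 + (t ^ 2) • A) :
    (Sq 0)⁻¹ = 1 ∧ ∀ i j, HasDerivAt (fun t => (Sq t)⁻¹ i j) 0 0 := by
  set C : n → ℝ := fun j => √((A *ᵥ Pi.single j 1) ⬝ᵥ (A *ᵥ Pi.single j 1))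
  have hbound (t : ℝ) (i j : n) : |((Sq t)⁻¹ - 1) i j| ≤ C j * ‖t - 0‖ ^ 2 := by
    rw [sub_zero, Real.norm_eq_abs, sq_abs, mul_comm]
    exact abs_inv_sub_one_apply_le (hSq t).1 hA (hSq t).2 i j
  refine ⟨?_, fun i j => ?_⟩
  · ext i j
    simpa [sub_eq_zero] using hbound 0 i j
  · have hO : (fun t => ((Sq t)⁻¹ - 1) i j) =O[nhds 0] fun t => ‖t - 0‖ ^ 2 :=
      Asymptotics.IsBigO.of_bound (C j) (Filter.Eventually.of_forall fun t => by
        simpa using hbound t i j)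
    simpa using (hO.hasFDerivAt one_lt_two).hasDerivAt.add_const ((1 : Matrix n n ℝ) i j)

end Matrix

lemma smulMat_one {N : ℕ} {H₀ : Type*} [AddCommGroup H₀] [Module ℝ H₀]
    (v : Fin N → H₀) :
    smulMat v 1 = v := by
  funext j
  simp [smulMat, Matrix.one_apply, ite_smul]

lemma smulMat_zero {N : ℕ} {H₀ : Type*} [AddCommGroup H₀] [Module ℝ H₀]
    (v : Fin N → H₀) :
    smulMat v 0 = 0 := by
  funext j
  simp [smulMat]

lemma HasDerivAt.smulMat {N : ℕ} {H₀ : Type*} [NormedAddCommGroup H₀] [NormedSpace ℝ H₀]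
    {v : ℝ → Fin N → H₀} {M : ℝ → Matrix (Fin N) (Fin N) ℝ} {v' : Fin N → H₀}
    {M' : Matrix (Fin N) (Fin N) ℝ} {t : ℝ} (hv : HasDerivAt v v' t)
    (hM : ∀ i j, HasDerivAt (fun s => M s i j) (M' i j) t) :
    HasDerivAt (fun s => _root_.smulMat (v s) (M s))
      (_root_.smulMat v' (M t) + _root_.smulMat (v t) M') t := by
  refine hasDerivAt_pi.2 fun j => ?_
  simpa only [_root_.smulMat, Pi.add_apply, ← Finset.sum_add_distrib] using
    HasDerivAt.fun_sum fun i _ => (hM i j).fun_smul (hasDerivAt_pi.1 hv i)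

/-- `Sq t` is the square root `(I + t²⟦η,η⟧)^{1/2}`, pinned down by the uniqueness of positive
semidefinite square roots. -/
theorem polar_retraction_local_rigidity_general {N : ℕ} {H₀ : Type*}
    [NormedAddCommGroup H₀] [InnerProductSpace ℝ H₀]
    (φ η : Fin N → H₀)
    (Sq : ℝ → Matrix (Fin N) (Fin N) ℝ)
    (hSq : ∀ t : ℝ, (Sq t).PosSemidef ∧ Sq t * Sq t = 1 + (t ^ 2) • outerProd η η) :
    (fun t : ℝ => smulMat (φ + t • η) (Sq t)⁻¹) 0 = φ ∧
    HasDerivAt (fun t : ℝ => smulMat (φ + t • η) (Sq t)⁻¹) η 0 := by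
  obtain ⟨hSq₀, hSq'⟩ :=
    Matrix.inv_sqrt_one_add_sq_smul_hasDerivAt_zero (Matrix.posSemidef_gram ℝ η) hSq
  have hline : HasDerivAt (fun t : ℝ => φ + t • η) η 0 := by
    simpa using ((hasDerivAt_id (0 : ℝ)).smul_const η).const_add φ
  refine ⟨by simp [hSq₀, smulMat_one], ?_⟩
  simpa [hSq₀, smulMat_one, smulMat_zero] using hline.smulMat (M' := 0) hSq'

/-- the curve `c(t) = (φ+tη)·(I + t²⟦η,η⟧)^{-1/2}` satisfies `c(0) = φ`
and `c'(0) = η`. Here, for each `t`, the square root `(I + t²⟦η,η⟧)^{1/2}` is represented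
by the (unique) symmetric positive semidefinite matrix `Sq t` with
`Sq t * Sq t = I + t²⟦η,η⟧`. -/
theorem polar_retraction_local_rigidity {N : ℕ} (hN : 1 ≤ N) {H₀ : Type*}
    [NormedAddCommGroup H₀] [InnerProductSpace ℝ H₀]
    (φ η : Fin N → H₀) (hφ : outerProd φ φ = 1)
    (hη : outerProd η φ + outerProd φ η = 0)
    (Sq : ℝ → Matrix (Fin N) (Fin N) ℝ)
    (hSq : ∀ t : ℝ, (Sq t).PosSemidef ∧ Sq t * Sq t = 1 + (t ^ 2) • outerProd η η) :
    (fun t : ℝ => smulMat (φ + t • η) (Sq t)⁻¹) 0 = φ ∧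
    HasDerivAt (fun t : ℝ => smulMat (φ + t • η) (Sq t)⁻¹) η 0 :=
  polar_retraction_local_rigidity_general φ η Sq hSq
end

section
/- Let φ be an orthonormal N-frame and η tangent at φ. Then for every t ∈ ℝ the polar-decomposition-based retraction R(φ, tη) := (φ+tη)·(I_N + t²⟦η,η⟧)^{-1/2} satisfies the second-order bound ‖R(φ, tη) − (φ+tη)‖_a ≤ t² · ‖φ+tη‖_a · ‖η‖_H². -/
/-! Write `S = (I + t²⟦η,η⟧)^{1/2}` and `w = φ + tη`, so the difference is `w (S⁻¹ - I)`.
Cauchy–Schwarz for `ã` bounds `‖w M‖_a` by the Frobenius norm of `M` times `‖w‖_a`.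
Diagonalising `S` by an orthogonal matrix, its eigenvalues satisfy `μᵢ ≥ 1` and
`Σ (μᵢ² - 1) = t² tr⟦η,η⟧ = t² ‖η‖_H²`, while `S⁻¹ - I` has Frobenius norm
`(Σ (1 - μᵢ⁻¹)²)^{1/2}`; since `0 ≤ 1 - μ⁻¹ ≤ μ² - 1` for `μ ≥ 1`, this is at most
`Σ (μᵢ² - 1)`. -/

open scoped RealInnerProductSpace

/-- The `H`-norm `‖v‖_H = (Σ_j ⟨v_j, v_j⟩_H)^{1/2}` of a tuple. -/
noncomputable def normH {N : ℕ} {H₀ : Type*} [NormedAddCommGroup H₀]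
    [InnerProductSpace ℝ H₀] (v : Fin N → H₀) : ℝ :=
  Real.sqrt (innerH v v)

/-- The `a`-norm `‖v‖_a = (Σ_j ã(v_j, v_j))^{1/2}` of a tuple, for a second inner
product `ã` on the underlying space. -/
noncomputable def normA {N : ℕ} {V : Type*} [AddCommGroup V] [Module ℝ V]
    (aForm : V →ₗ[ℝ] V →ₗ[ℝ] ℝ) (v : Fin N → V) : ℝ :=
  Real.sqrt (∑ j, aForm (v j) (v j))

open Matrix

section UnitaryConj

variable {n : Type*} [Fintype n] [DecidableEq n]

theorem Matrix.trace_conjStarAlgAut {R : Type*} [CommRing R] [StarRing R]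
    (U : unitary (Matrix n n R)) (X : Matrix n n R) :
    (Unitary.conjStarAlgAut R _ U X).trace = X.trace := by
  rw [Unitary.conjStarAlgAut_apply, trace_mul_cycle, Unitary.coe_star_mul_self, one_mul]

theorem Matrix.sum_sq_conjStarAlgAut_diagonal (U : unitary (Matrix n n ℝ)) (d : n → ℝ) :
    ∑ i, ∑ j, Unitary.conjStarAlgAut ℝ _ U (diagonal d) i j ^ 2 = ∑ i, d i ^ 2 := by
  set X := Unitary.conjStarAlgAut ℝ _ U (diagonal d)
  have hX : star X = X := by
    rw [← map_star, star_eq_conjTranspose, diagonal_conjTranspose, star_trivial]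
  have hXX : X * X = Unitary.conjStarAlgAut ℝ _ U (diagonal fun i => d i ^ 2) := by
    simp only [X, ← map_mul, diagonal_mul_diagonal, sq]
  calc ∑ i, ∑ j, X i j ^ 2 = (star X * X).trace := by
        simp only [trace, diag, mul_apply, star_apply, star_trivial, sq]
        rw [Finset.sum_comm]
    _ = ∑ i, d i ^ 2 := by rw [hX, hXX, trace_conjStarAlgAut, trace_diagonal]

end UnitaryConj

theorem Real.sum_sq_inv_sub_one_le {ι : Type*} [Fintype ι] (μ : ι → ℝ) (hμ : ∀ i, 1 ≤ μ i) :
    ∑ i, ((μ i)⁻¹ - 1) ^ 2 ≤ (∑ i, (μ i ^ 2 - 1)) ^ 2 := by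
  have h_sq_sub_nonneg : ∀ i, 0 ≤ μ i ^ 2 - 1 := fun i => by nlinarith [hμ i]
  calc ∑ i, ((μ i)⁻¹ - 1) ^ 2 ≤ ∑ i, (μ i ^ 2 - 1) ^ 2 := by
        refine Finset.sum_le_sum fun i _ => ?_
        have h_inv_le : (μ i)⁻¹ ≤ 1 := inv_le_one_of_one_le₀ (hμ i)
        have h_mul_inv : μ i * (μ i)⁻¹ = 1 := mul_inv_cancel₀ (by linarith [hμ i])
        have h_le : 1 - (μ i)⁻¹ ≤ μ i ^ 2 - 1 := by nlinarith [hμ i]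
        rw [← neg_sub, neg_sq]
        exact pow_le_pow_left₀ (sub_nonneg.2 h_inv_le) h_le 2
    _ ≤ (∑ i, (μ i ^ 2 - 1)) ^ 2 := Finset.sum_sq_le_sq_sum_of_nonneg fun i _ => h_sq_sub_nonneg i

theorem Matrix.PosSemidef.sum_sq_inv_sub_one_le_trace_sq {n : Type*} [Fintype n] [DecidableEq n]
    {S B : Matrix n n ℝ} (hS : S.PosSemidef) (hB : B.PosSemidef) (hSB : S * S = 1 + B) :
    ∑ i, ∑ j, (S⁻¹ - 1) i j ^ 2 ≤ B.trace ^ 2 := by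
  set μ := hS.1.eigenvalues
  set U := hS.1.eigenvectorUnitary
  set Φ := Unitary.conjStarAlgAut ℝ (Matrix n n ℝ) U
  have hS_eq : S = Φ (diagonal μ) := by simpa [Φ, U, μ] using hS.1.spectral_theorem
  have hB_eq : B = Φ (diagonal fun i => μ i ^ 2 - 1) := by
    rw [eq_sub_of_add_eq' hSB.symm, hS_eq, ← map_mul, ← map_one Φ, ← map_sub,
      diagonal_mul_diagonal, ← diagonal_one, diagonal_sub]
    simp only [sq]
  have hμ : ∀ i, 1 ≤ μ i := by
    have hD : (diagonal fun i => μ i ^ 2 - 1).PosSemidef := by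
      rwa [hB_eq, Unitary.conjStarAlgAut_apply,
        (Unitary.isUnit_coe (U := U)).posSemidef_star_right_conjugate_iff] at hB
    intro i
    have := posSemidef_diagonal_iff.1 hD i
    nlinarith [hS.eigenvalues_nonneg i]
  have hS_inv : S⁻¹ = Φ (diagonal fun i => (μ i)⁻¹) := by
    refine inv_eq_left_inv ?_
    rw [hS_eq, ← map_mul, diagonal_mul_diagonal, ← map_one Φ, ← diagonal_one]
    congr 2
    ext i
    exact inv_mul_cancel₀ (by linarith [hμ i])
  have hS_inv_sub : S⁻¹ - 1 = Φ (diagonal fun i => (μ i)⁻¹ - 1) := by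
    rw [hS_inv, ← map_one Φ, ← map_sub, ← diagonal_one, diagonal_sub]
  rw [hS_inv_sub, sum_sq_conjStarAlgAut_diagonal, hB_eq, trace_conjStarAlgAut, trace_diagonal]
  exact Real.sum_sq_inv_sub_one_le μ hμ

namespace LinearMap.BilinForm

variable {V : Type*} [AddCommGroup V] [Module ℝ V] {B : LinearMap.BilinForm ℝ V}

theorem IsPosSemidef.apply_sum_smul_self_le (hB : B.IsPosSemidef) {ι : Type*} [Fintype ι]
    (y : ι → ℝ) (v : ι → V) :
    B (∑ i, y i • v i) (∑ i, y i • v i) ≤ (∑ i, y i ^ 2) * ∑ i, B (v i) (v i) := by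
  have hs := hB.isNonneg.nonneg
  have h_entry : ∀ i j, y i * y j * B (v i) (v j) ≤
      (|y i| * √(B (v i) (v i))) * (|y j| * √(B (v j) (v j))) := fun i j =>
    calc y i * y j * B (v i) (v j) ≤ |y i| * |y j| * |B (v i) (v j)| := by
          rw [← abs_mul, ← abs_mul]; exact le_abs_self _
      _ ≤ |y i| * |y j| * √(B (v i) (v i) * B (v j) (v j)) := by
          gcongr; exact Real.abs_le_sqrt (apply_sq_le_of_symm B hs (isSymm_iff.1 hB.isSymm) _ _)
      _ = _ := by rw [Real.sqrt_mul (hs _)]; ring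
  calc B (∑ i, y i • v i) (∑ i, y i • v i) = ∑ i, ∑ j, y i * y j * B (v i) (v j) := by
        simp only [sum_left, sum_right, smul_left, smul_right, Finset.mul_sum]
        rw [Finset.sum_comm]
        exact Finset.sum_congr rfl fun i _ => Finset.sum_congr rfl fun j _ => by ring
    _ ≤ (∑ i, |y i| * √(B (v i) (v i))) ^ 2 := by
        rw [sq, Finset.sum_mul_sum]
        exact Finset.sum_le_sum fun i _ => Finset.sum_le_sum fun j _ => h_entry i j
    _ ≤ (∑ i, |y i| ^ 2) * ∑ i, √(B (v i) (v i)) ^ 2 := Finset.sum_mul_sq_le_sq_mul_sq _ _ _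
    _ = (∑ i, y i ^ 2) * ∑ i, B (v i) (v i) := by simp only [sq_abs, Real.sq_sqrt (hs _)]

end LinearMap.BilinForm

theorem smulMat_sub_one {N : ℕ} {V : Type*} [AddCommGroup V] [Module ℝ V] (v : Fin N → V)
    (S : Matrix (Fin N) (Fin N) ℝ) : smulMat v (S - 1) = smulMat v S - v := by
  funext j
  simp [smulMat, sub_smul, Finset.sum_sub_distrib, one_apply]

theorem normA_smulMat_le {N : ℕ} {V : Type*} [AddCommGroup V] [Module ℝ V]
    {B : LinearMap.BilinForm ℝ V} (hB : B.IsPosSemidef) (v : Fin N → V)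
    (S : Matrix (Fin N) (Fin N) ℝ) :
    normA B (smulMat v S) ≤ √(∑ i, ∑ j, S i j ^ 2) * normA B v := by
  rw [normA, normA, ← Real.sqrt_mul (by positivity), Finset.sum_comm, Finset.sum_mul]
  exact Real.sqrt_le_sqrt (Finset.sum_le_sum fun j _ =>
    hB.apply_sum_smul_self_le (fun i => S i j) v)

theorem polar_retraction_second_order_bound_general {N : ℕ} {V : Type*}
    [NormedAddCommGroup V] [InnerProductSpace ℝ V]
    (aForm : V →ₗ[ℝ] V →ₗ[ℝ] ℝ)
    (hsymm : ∀ u w : V, aForm u w = aForm w u)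
    (hpos : ∀ u : V, u ≠ 0 → 0 < aForm u u)
    (φ η : Fin N → V)
    (Sq : ℝ → Matrix (Fin N) (Fin N) ℝ)
    (hSq : ∀ t : ℝ, (Sq t).PosSemidef ∧ Sq t * Sq t = 1 + (t ^ 2) • outerProd η η) :
    ∀ t : ℝ,
      normA aForm (smulMat (φ + t • η) (Sq t)⁻¹ - (φ + t • η)) ≤
        t ^ 2 * normA aForm (φ + t • η) * (normH η) ^ 2 := by
  intro t
  obtain ⟨hS, hS_sq⟩ := hSq t
  have hB : (t ^ 2 • outerProd η η).PosSemidef := (posSemidef_gram ℝ η).smul (sq_nonneg t)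
  have h_trace : (t ^ 2 • outerProd η η).trace = t ^ 2 * normH η ^ 2 := by
    have h_inner : 0 ≤ innerH η η := Finset.sum_nonneg fun j _ => real_inner_self_nonneg
    rw [normH, Real.sq_sqrt h_inner, trace_smul, smul_eq_mul, innerH]
    rfl
  have ha : LinearMap.BilinForm.IsPosSemidef aForm := by
    refine ⟨⟨hsymm⟩, ⟨fun u => ?_⟩⟩
    rcases eq_or_ne u 0 with rfl | hu
    · simp
    · exact (hpos u hu).le
  calc normA aForm (smulMat (φ + t • η) (Sq t)⁻¹ - (φ + t • η))
      = normA aForm (smulMat (φ + t • η) ((Sq t)⁻¹ - 1)) := by rw [smulMat_sub_one]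
    _ ≤ √(∑ i, ∑ j, ((Sq t)⁻¹ - 1) i j ^ 2) * normA aForm (φ + t • η) :=
        normA_smulMat_le ha _ _
    _ ≤ t ^ 2 * normH η ^ 2 * normA aForm (φ + t • η) := by
        refine mul_le_mul_of_nonneg_right ?_ (Real.sqrt_nonneg _)
        rw [Real.sqrt_le_left (by positivity), ← h_trace]
        exact hS.sum_sq_inv_sub_one_le_trace_sq hB hS_sq
    _ = t ^ 2 * normA aForm (φ + t • η) * normH η ^ 2 := by ring

/-- second-order boundedness of the polar-decomposition-based retraction:
`‖R(φ,tη) − (φ+tη)‖_a ≤ t² ‖φ+tη‖_a ‖η‖_H²`. The square root `(I + t²⟦η,η⟧)^{1/2}` is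
represented, for each `t`, by the (unique) symmetric positive semidefinite matrix `Sq t`
with `Sq t * Sq t = I + t²⟦η,η⟧`. -/
theorem polar_retraction_second_order_bound {N : ℕ} (hN : 1 ≤ N) {V : Type*}
    [NormedAddCommGroup V] [InnerProductSpace ℝ V]
    (aForm : V →ₗ[ℝ] V →ₗ[ℝ] ℝ)
    (hsymm : ∀ u w : V, aForm u w = aForm w u)
    (hpos : ∀ u : V, u ≠ 0 → 0 < aForm u u)
    (φ η : Fin N → V) (hφ : outerProd φ φ = 1)
    (hη : outerProd η φ + outerProd φ η = 0)
    (Sq : ℝ → Matrix (Fin N) (Fin N) ℝ)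
    (hSq : ∀ t : ℝ, (Sq t).PosSemidef ∧ Sq t * Sq t = 1 + (t ^ 2) • outerProd η η) :
    ∀ t : ℝ,
      normA aForm (smulMat (φ + t • η) (Sq t)⁻¹ - (φ + t • η)) ≤
        t ^ 2 * normA aForm (φ + t • η) * (normH η) ^ 2 :=
  polar_retraction_second_order_bound_general aForm hsymm hpos φ η Sq hSq
end

section
/- Let φ be an orthonormal N-frame and η tangent at φ. Then for every t ∈ ℝ and every pair (q, R) with q : Fin N → Ṽ an orthonormal N-frame (with respect to ⟨·,·⟩_H) and R ∈ ℝ^{N×N} upper triangular with strictly positive diagonal entries such that φ + tη = qR, the second-order bound ‖q − (φ+tη)‖_a ≤ (t²/√2) · ‖φ+tη‖_a · (1 + t²‖η‖_H²)^{1/2} · ‖η‖_H² holds. -/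
open scoped RealInnerProductSpace

/-- Cauchy-Schwarz for a positive symmetric bilinear form. -/
lemma bilin_cs {V : Type*} [AddCommGroup V] [Module ℝ V]
    (aForm : V →ₗ[ℝ] V →ₗ[ℝ] ℝ) (hsymm : ∀ u w : V, aForm u w = aForm w u)
    (hnn : ∀ u : V, 0 ≤ aForm u u) (u w : V) :
    (aForm u w)^2 ≤ aForm u u * aForm w w := by
  have key : ∀ s : ℝ, 0 ≤ aForm w w * (s * s) + (2 * aForm u w) * s + aForm u u := by
    intro s
    have h0 := hnn (u + s • w)
    have hexp : aForm (u + s • w) (u + s • w)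
        = aForm w w * (s * s) + (2 * aForm u w) * s + aForm u u := by
      simp only [map_add, map_smul, LinearMap.add_apply, LinearMap.smul_apply, smul_eq_mul]
      rw [hsymm w u]; ring
    rw [hexp] at h0; exact h0
  have := discrim_le_zero key
  rw [discrim] at this
  nlinarith [this]

/-- A quadratic form is bounded by trace times Euclidean norm for a Gram-like kernel. -/
lemma quad_le_trace {N : ℕ} (A : Fin N → Fin N → ℝ)
    (hA : ∀ i k, (A i k)^2 ≤ A i i * A k k) (hd : ∀ i, 0 ≤ A i i) (c : Fin N → ℝ) :
    ∑ i, ∑ k, c i * c k * A i k ≤ (∑ i, A i i) * ∑ i, (c i)^2 := by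
  have habs : ∀ i k, c i * c k * A i k
      ≤ (|c i| * Real.sqrt (A i i)) * (|c k| * Real.sqrt (A k k)) := by
    intro i k
    have h1 : |A i k| ≤ Real.sqrt (A i i) * Real.sqrt (A k k) := by
      rw [← Real.sqrt_mul_self (abs_nonneg (A i k)), ← Real.sqrt_mul (hd i)]
      exact Real.sqrt_le_sqrt (by nlinarith [hA i k, sq_abs (A i k)])
    calc c i * c k * A i k ≤ |c i * c k * A i k| := le_abs_self _
      _ = |c i| * |c k| * |A i k| := by rw [abs_mul, abs_mul]
      _ ≤ |c i| * |c k| * (Real.sqrt (A i i) * Real.sqrt (A k k)) :=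
          mul_le_mul_of_nonneg_left h1 (by positivity)
      _ = (|c i| * Real.sqrt (A i i)) * (|c k| * Real.sqrt (A k k)) := by ring
  calc ∑ i, ∑ k, c i * c k * A i k
      ≤ ∑ i, ∑ k, (|c i| * Real.sqrt (A i i)) * (|c k| * Real.sqrt (A k k)) :=
        Finset.sum_le_sum fun i _ => Finset.sum_le_sum fun k _ => habs i k
    _ = (∑ i, |c i| * Real.sqrt (A i i))^2 := by rw [sq, Finset.sum_mul_sum]
    _ ≤ (∑ i, (c i)^2) * ∑ i, (A i i) := by
        have h := Finset.sum_mul_sq_le_sq_mul_sq Finset.univ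
          (fun i => |c i|) (fun i => Real.sqrt (A i i))
        calc (∑ i, |c i| * Real.sqrt (A i i))^2
            ≤ (∑ i, |c i|^2) * ∑ i, Real.sqrt (A i i)^2 := h
          _ = (∑ i, (c i)^2) * ∑ i, (A i i) := by
              congr 1
              · exact Finset.sum_congr rfl fun i _ => sq_abs _
              · exact Finset.sum_congr rfl fun i _ => Real.sq_sqrt (hd i)
    _ = (∑ i, A i i) * ∑ i, (c i)^2 := mul_comm _ _


set_option maxHeartbeats 2000000 in
/-- second-order boundedness of the `qR`-based retraction: if
`φ + tη = qR` with `q` an orthonormal frame (w.r.t. `⟨·,·⟩_H`) and `R` upper triangular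
with strictly positive diagonal, then
`‖q − (φ+tη)‖_a ≤ (t²/√2) ‖φ+tη‖_a (1 + t²‖η‖_H²)^{1/2} ‖η‖_H²`. -/
theorem qR_retraction_second_order_bound {N : ℕ} (hN : 1 ≤ N) {V : Type*}
    [NormedAddCommGroup V] [InnerProductSpace ℝ V]
    (aForm : V →ₗ[ℝ] V →ₗ[ℝ] ℝ)
    (hsymm : ∀ u w : V, aForm u w = aForm w u)
    (hpos : ∀ u : V, u ≠ 0 → 0 < aForm u u)
    (φ η : Fin N → V) (hφ : outerProd φ φ = 1)
    (hη : outerProd η φ + outerProd φ η = 0) :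
    ∀ (t : ℝ) (q : Fin N → V) (R : Matrix (Fin N) (Fin N) ℝ),
      outerProd q q = 1 →
      (∀ i j : Fin N, j < i → R i j = 0) →
      (∀ i : Fin N, 0 < R i i) →
      φ + t • η = smulMat q R →
      normA aForm (q - (φ + t • η)) ≤
        t ^ 2 / Real.sqrt 2 * normA aForm (φ + t • η) *
          Real.sqrt (1 + t ^ 2 * (normH η) ^ 2) * (normH η) ^ 2 := by
  intro t q R hq hRtri hRdiag hqR
  set v : Fin N → V := φ + t • η with hv
  set g : ℝ := ∑ j, ⟪η j, η j⟫ with hg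
  set x : ℝ := t ^ 2 * g with hx
  have hgnn : 0 ≤ g := Finset.sum_nonneg fun j _ => real_inner_self_nonneg
  have hxnn : 0 ≤ x := mul_nonneg (sq_nonneg t) hgnn
  -- entrywise forms of the hypotheses
  have hφij : ∀ i j, ⟪φ i, φ j⟫ = if i = j then (1:ℝ) else 0 := by
    intro i j
    have h := congrFun (congrFun hφ i) j
    simpa [outerProd, Matrix.one_apply] using h
  have hqij : ∀ i j, ⟪q i, q j⟫ = if i = j then (1:ℝ) else 0 := by
    intro i j
    have h := congrFun (congrFun hq i) j
    simpa [outerProd, Matrix.one_apply] using h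
  have hηφ : ∀ i j, ⟪η i, φ j⟫ + ⟪φ i, η j⟫ = 0 := by
    intro i j
    have h := congrFun (congrFun hη i) j
    simpa [outerProd, Matrix.add_apply] using h
  -- Gram identity : RᵀR = 1 + t² G
  have hvv : ∀ i j, ⟪v i, v j⟫ = (if i = j then (1:ℝ) else 0) + t ^ 2 * ⟪η i, η j⟫ := by
    intro i j
    have hvi : v i = φ i + t • η i := rfl
    have hvj : v j = φ j + t • η j := rfl
    rw [hvi, hvj]
    simp only [inner_add_left, inner_add_right, real_inner_smul_left, real_inner_smul_right]
    have h1 := hφij i j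
    have h2 := hηφ i j
    rw [h1]; ring_nf; linarith [mul_eq_mul_left_iff.mpr (Or.inl h2 : _ ∨ t = 0)]
  have hsm : ∀ i j, ⟪smulMat q R i, smulMat q R j⟫ = ∑ k, R k i * R k j := by
    intro i j
    simp only [smulMat]
    rw [sum_inner]
    refine Finset.sum_congr rfl fun k _ => ?_
    rw [real_inner_smul_left, inner_sum]
    simp only [real_inner_smul_right, hqij, mul_ite, mul_one, mul_zero]
    rw [Finset.sum_ite_eq Finset.univ k (fun l => R l j)]
    simp [mul_comm]
  have hRR : ∀ i j, (∑ k, R k i * R k j)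
      = (if i = j then (1:ℝ) else 0) + t ^ 2 * ⟪η i, η j⟫ := by
    intro i j
    rw [← hsm i j, ← hqR]
    exact hvv i j
  -- positivity of the Gram matrix of η
  have hGpsd : ∀ c : Fin N → ℝ, 0 ≤ ∑ i, ∑ j, c i * c j * ⟪η i, η j⟫ := by
    intro c
    have h : ∑ i, ∑ j, c i * c j * ⟪η i, η j⟫ = ⟪∑ i, c i • η i, ∑ j, c j • η j⟫ := by
      rw [sum_inner]
      refine Finset.sum_congr rfl fun i _ => ?_
      rw [real_inner_smul_left, inner_sum, Finset.mul_sum]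
      refine Finset.sum_congr rfl fun j _ => ?_
      rw [real_inner_smul_right]; ring
    rw [h]
    exact real_inner_self_nonneg
  -- R expands norms
  have hexpand : ∀ z : Fin N → ℝ, ∑ k, (∑ l, R k l * z l) ^ 2
      = ∑ l, ∑ m, z l * z m * (∑ k, R k l * R k m) := by
    intro z
    simp_rw [sq, Finset.sum_mul_sum]
    rw [Finset.sum_comm]
    refine Finset.sum_congr rfl fun l _ => ?_
    rw [Finset.sum_comm]
    refine Finset.sum_congr rfl fun m _ => ?_
    rw [Finset.mul_sum]
    exact Finset.sum_congr rfl fun k _ => by ring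
  have hRz : ∀ z : Fin N → ℝ, ∑ k, (z k) ^ 2 ≤ ∑ k, (∑ l, R k l * z l) ^ 2 := by
    intro z
    rw [hexpand]
    have h1 : ∀ l m : Fin N, z l * z m * (∑ k, R k l * R k m)
        = (if l = m then z l * z m else 0) + t ^ 2 * (z l * z m * ⟪η l, η m⟫) := by
      intro l m
      rw [hRR l m]
      by_cases h : l = m <;> simp [h] <;> ring
    simp_rw [h1, Finset.sum_add_distrib]
    have e1 : ∑ l : Fin N, ∑ m : Fin N, (if l = m then z l * z m else 0) = ∑ l, (z l) ^ 2 := by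
      refine Finset.sum_congr rfl fun l _ => ?_
      rw [Finset.sum_ite_eq Finset.univ l (fun m => z l * z m)]
      simp [sq]
    rw [e1]
    have e2 : 0 ≤ ∑ l : Fin N, ∑ m : Fin N, t ^ 2 * (z l * z m * ⟪η l, η m⟫) := by
      simp_rw [← Finset.mul_sum]
      exact mul_nonneg (sq_nonneg t) (hGpsd z)
    linarith
  -- invertibility of R
  have hut : R.BlockTriangular id := fun i j h => hRtri i j h
  have hdetpos : 0 < R.det := by
    rw [Matrix.det_of_upperTriangular hut]
    exact Finset.prod_pos fun i _ => hRdiag i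
  have hdetunit : IsUnit R.det := isUnit_iff_ne_zero.2 hdetpos.ne'
  haveI : Invertible R := R.invertibleOfIsUnitDet hdetunit
  set S : Matrix (Fin N) (Fin N) ℝ := R⁻¹ with hSdef
  have hRS : R * S = 1 := Matrix.mul_nonsing_inv R hdetunit
  have hSR : S * R = 1 := Matrix.nonsing_inv_mul R hdetunit
  have hStri : S.BlockTriangular id := Matrix.blockTriangular_inv_of_blockTriangular hut
  -- S is a contraction
  have hSz : ∀ z : Fin N → ℝ, ∑ k, (∑ l, S k l * z l) ^ 2 ≤ ∑ k, (z k) ^ 2 := by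
    intro z
    have h := hRz (fun l => ∑ m, S l m * z m)
    have hc : ∀ k, (∑ l, R k l * (∑ m, S l m * z m)) = z k := by
      intro k
      calc ∑ l, R k l * ∑ m, S l m * z m = ∑ l, ∑ m, R k l * S l m * z m := by
            refine Finset.sum_congr rfl fun l _ => ?_
            rw [Finset.mul_sum]
            exact Finset.sum_congr rfl fun m _ => by ring
        _ = ∑ m, (∑ l, R k l * S l m) * z m := by
            rw [Finset.sum_comm]
            refine Finset.sum_congr rfl fun m _ => ?_
            rw [Finset.sum_mul]
        _ = z k := by
            simp_rw [← Matrix.mul_apply, hRS, Matrix.one_apply, ite_mul, one_mul, zero_mul]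
            rw [Finset.sum_ite_eq Finset.univ k z]
            simp
    calc ∑ k, (∑ l, S k l * z l) ^ 2
        ≤ ∑ k, (∑ l, R k l * (∑ m, S l m * z m)) ^ 2 := h
      _ = ∑ k, (z k) ^ 2 := by simp_rw [hc]
  -- diagonal of R is at least 1
  have hRjj : ∀ j, 1 ≤ R j j := by
    intro j
    have hz := hSz (fun m => if m = j then (1:ℝ) else 0)
    have hl : ∑ k, (∑ l, S k l * (if l = j then (1:ℝ) else 0)) ^ 2 = ∑ k, (S k j) ^ 2 := by
      refine Finset.sum_congr rfl fun k _ => ?_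
      congr 1
      simp_rw [mul_ite, mul_one, mul_zero]
      exact Finset.sum_ite_eq' Finset.univ j (fun l => S k l)  |>.trans (by simp)
    have hr : ∑ k : Fin N, ((if k = j then (1:ℝ) else 0)) ^ 2 = 1 := by
      simp [sq]
    rw [hl, hr] at hz
    have h1 : (S j j) ^ 2 ≤ 1 := by
      have hle : (S j j) ^ 2 ≤ ∑ k, (S k j) ^ 2 :=
        Finset.single_le_sum (f := fun k => (S k j) ^ 2) (fun k _ => sq_nonneg _)
          (Finset.mem_univ j)
      linarith
    have h2 : R j j * S j j = 1 := by
      have h := congrFun (congrFun hRS j) j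
      rw [Matrix.mul_apply] at h
      rw [Finset.sum_eq_single j] at h
      · simpa [Matrix.one_apply] using h
      · intro b _ hb
        rcases lt_or_gt_of_ne hb with hlt | hgt
        · rw [hRtri j b hlt]; ring
        · rw [hStri (show id j < id b from hgt)]; ring
      · intro hmem; exact absurd (Finset.mem_univ j) hmem
    nlinarith [hRdiag j, h1, h2, sq_nonneg (S j j - 1), sq_nonneg (S j j + 1)]
  -- the matrix M = R - 1 and its squared Frobenius norm
  set Mm : Fin N → Fin N → ℝ := fun i j => R i j - (if i = j then 1 else 0) with hMm
  set m2 : ℝ := ∑ i, ∑ j, (Mm i j) ^ 2 with hm2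
  have hm2nn : 0 ≤ m2 :=
    Finset.sum_nonneg fun i _ => Finset.sum_nonneg fun j _ => sq_nonneg _
  have htrR : m2 = x - 2 * ∑ i, (R i i - 1) := by
    have hpoint : ∀ i, ∑ j, (Mm i j) ^ 2 = (∑ j, R i j * R i j) - 2 * R i i + 1 := by
      intro i
      have h : ∀ j, (Mm i j) ^ 2
          = R i j * R i j - 2 * (if i = j then R i j else 0) + (if i = j then (1:ℝ) else 0) := by
        intro j
        simp only [hMm]
        by_cases h : i = j <;> simp [h] <;> ring
      simp_rw [h, Finset.sum_add_distrib, Finset.sum_sub_distrib, ← Finset.mul_sum]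
      rw [Finset.sum_ite_eq Finset.univ i (fun j => R i j),
        Finset.sum_ite_eq Finset.univ i (fun _ => (1:ℝ))]
      simp
    have hcol : ∑ j, ∑ i, R i j * R i j = ↑N + x := by
      have : ∀ j, ∑ i, R i j * R i j = 1 + t ^ 2 * ⟪η j, η j⟫ := by
        intro j
        have := hRR j j
        simpa using this
      simp_rw [this, Finset.sum_add_distrib, ← Finset.mul_sum]
      simp [hx, hg]
    rw [hm2]
    calc ∑ i, ∑ j, (Mm i j) ^ 2
        = ∑ i, ((∑ j, R i j * R i j) - 2 * R i i + 1) :=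
          Finset.sum_congr rfl fun i _ => hpoint i
      _ = (∑ i, ∑ j, R i j * R i j) - 2 * (∑ i, R i i) + ↑N := by
          rw [Finset.sum_add_distrib, Finset.sum_sub_distrib, ← Finset.mul_sum]
          simp
      _ = (↑N + x) - 2 * (∑ i, R i i) + ↑N := by rw [← hcol, Finset.sum_comm]
      _ = x - 2 * ∑ i, (R i i - 1) := by
          rw [Finset.sum_sub_distrib]
          simp; ring
  have hm2x : m2 ≤ x := by
    have h : 0 ≤ ∑ i, (R i i - 1) :=
      Finset.sum_nonneg fun i _ => by linarith [hRjj i]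
    rw [htrR]; linarith
  -- W = MᵀM
  set W : Fin N → Fin N → ℝ := fun i j => ∑ k, Mm k i * Mm k j with hWdef
  have hMMt : ∀ i j, Mm i j + Mm j i = t ^ 2 * ⟪η i, η j⟫ - W i j := by
    intro i j
    have h1 : W i j = (∑ k, R k i * R k j) - R j i - R i j + (if i = j then (1:ℝ) else 0) := by
      have hpt : ∀ k, Mm k i * Mm k j
          = R k i * R k j - (if k = j then R k i else 0) - (if k = i then R k j else 0)
            + (if k = i then (if k = j then (1:ℝ) else 0) else 0) := by
        intro k
        simp only [hMm]
        by_cases hki : k = i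
        · subst hki
          by_cases hkj : k = j
          · subst hkj; simp only [eq_self_iff_true, if_true]; ring
          · simp only [eq_self_iff_true, if_true, if_neg hkj]; ring
        · by_cases hkj : k = j
          · subst hkj; simp only [eq_self_iff_true, if_true, if_neg hki]; ring
          · simp only [if_neg hki, if_neg hkj]; ring
      simp only [hWdef]
      simp_rw [hpt, Finset.sum_add_distrib, Finset.sum_sub_distrib]
      rw [Finset.sum_ite_eq' Finset.univ j (fun k => R k i),
        Finset.sum_ite_eq' Finset.univ i (fun k => R k j),
        Finset.sum_ite_eq' Finset.univ i (fun k => if k = j then (1:ℝ) else 0)]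
      simp
    rw [h1, hRR i j]
    have : Mm i j + Mm j i = R i j + R j i - 2 * (if i = j then (1:ℝ) else 0) := by
      simp only [hMm]
      by_cases h : i = j
      · subst h; simp only [eq_self_iff_true, if_true]; ring
      · simp only [if_neg h, if_neg (Ne.symm h)]; ring
    rw [this]
    ring
  have hsym2 : 2 * m2 ≤ ∑ i, ∑ j, (Mm i j + Mm j i) ^ 2 := by
    have hpt : ∀ i j : Fin N, (Mm i j + Mm j i) ^ 2
        = (Mm i j) ^ 2 + (Mm j i) ^ 2 + 2 * (Mm i j * Mm j i) := fun i j => by ring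
    simp_rw [hpt, Finset.sum_add_distrib]
    have e1 : ∑ i, ∑ j, (Mm j i) ^ 2 = m2 := by rw [hm2]; exact Finset.sum_comm
    have e2 : 0 ≤ ∑ i, ∑ j, 2 * (Mm i j * Mm j i) := by
      refine Finset.sum_nonneg fun i _ => Finset.sum_nonneg fun j _ => ?_
      rcases lt_trichotomy i j with h | h | h
      · have hz : Mm j i = 0 := by
          simp only [hMm]
          rw [hRtri j i h, if_neg (ne_of_lt h).symm]; ring
        simp [hz]
      · subst h; nlinarith [sq_nonneg (Mm i i)]
      · have hz : Mm i j = 0 := by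
          simp only [hMm]
          rw [hRtri i j h, if_neg (ne_of_lt h).symm]; ring
        simp [hz]
    rw [e1, ← hm2]
    linarith
  have hcross : 0 ≤ ∑ i, ∑ j, ⟪η i, η j⟫ * W i j := by
    have h : ∑ i, ∑ j, ⟪η i, η j⟫ * W i j
        = ∑ k, ∑ i, ∑ j, Mm k i * Mm k j * ⟪η i, η j⟫ := by
      have e1 : ∑ i, ∑ j, ⟪η i, η j⟫ * W i j
          = ∑ i, ∑ k, ∑ j, Mm k i * Mm k j * ⟪η i, η j⟫ := by
        refine Finset.sum_congr rfl fun i _ => ?_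
        rw [Finset.sum_comm]
        refine Finset.sum_congr rfl fun j _ => ?_
        simp only [hWdef]
        rw [Finset.mul_sum]
        exact Finset.sum_congr rfl fun k _ => by ring
      rw [e1, Finset.sum_comm]
    rw [h]
    exact Finset.sum_nonneg fun k _ => hGpsd (fun i => Mm k i)
  have hG2 : ∑ i, ∑ j, ⟪η i, η j⟫ ^ 2 ≤ g ^ 2 := by
    have hpt : ∀ i j : Fin N, ⟪η i, η j⟫ ^ 2 ≤ ⟪η i, η i⟫ * ⟪η j, η j⟫ := by
      intro i j
      rw [sq]
      exact real_inner_mul_inner_self_le (η i) (η j)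
    calc ∑ i, ∑ j, ⟪η i, η j⟫ ^ 2
        ≤ ∑ i, ∑ j, ⟪η i, η i⟫ * ⟪η j, η j⟫ :=
          Finset.sum_le_sum fun i _ => Finset.sum_le_sum fun j _ => hpt i j
      _ = g ^ 2 := by rw [hg, sq, Finset.sum_mul_sum]
  have hW2 : ∑ i, ∑ j, (W i j) ^ 2 ≤ m2 ^ 2 := by
    have hWd : ∀ i, W i i = ∑ k, (Mm k i) ^ 2 := by
      intro i
      simp only [hWdef]
      exact Finset.sum_congr rfl fun k _ => (sq _).symm
    have hpt : ∀ i j, (W i j) ^ 2 ≤ W i i * W j j := by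
      intro i j
      have h := Finset.sum_mul_sq_le_sq_mul_sq Finset.univ (fun k => Mm k i) (fun k => Mm k j)
      rw [hWd i, hWd j]
      simpa [hWdef] using h
    have htrW : ∑ i, W i i = m2 := by
      simp_rw [hWd]
      rw [hm2]
      exact Finset.sum_comm
    calc ∑ i, ∑ j, (W i j) ^ 2
        ≤ ∑ i, ∑ j, W i i * W j j :=
          Finset.sum_le_sum fun i _ => Finset.sum_le_sum fun j _ => hpt i j
      _ = m2 ^ 2 := by rw [← htrW, sq, Finset.sum_mul_sum]
  have key2 : 2 * m2 ≤ x ^ 2 + m2 ^ 2 := by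
    have hexp2 : ∑ i, ∑ j, (Mm i j + Mm j i) ^ 2
        = t ^ 2 * t ^ 2 * (∑ i, ∑ j, ⟪η i, η j⟫ ^ 2)
          - 2 * t ^ 2 * (∑ i, ∑ j, ⟪η i, η j⟫ * W i j) + ∑ i, ∑ j, (W i j) ^ 2 := by
      calc ∑ i, ∑ j, (Mm i j + Mm j i) ^ 2
          = ∑ i, ∑ j, (t ^ 2 * t ^ 2 * ⟪η i, η j⟫ ^ 2
              - 2 * t ^ 2 * (⟪η i, η j⟫ * W i j) + (W i j) ^ 2) :=
            Finset.sum_congr rfl fun i _ => Finset.sum_congr rfl fun j _ => by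
              rw [hMMt i j]; ring
        _ = _ := by
            simp_rw [Finset.sum_add_distrib, Finset.sum_sub_distrib, ← Finset.mul_sum]
    have hx2 : t ^ 2 * t ^ 2 * (∑ i, ∑ j, ⟪η i, η j⟫ ^ 2) ≤ x ^ 2 := by
      have h := mul_le_mul_of_nonneg_left hG2 (by positivity : (0:ℝ) ≤ t ^ 2 * t ^ 2)
      calc t ^ 2 * t ^ 2 * (∑ i, ∑ j, ⟪η i, η j⟫ ^ 2) ≤ t ^ 2 * t ^ 2 * g ^ 2 := h
        _ = x ^ 2 := by rw [hx]; ring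
    have hcr : 0 ≤ 2 * t ^ 2 * (∑ i, ∑ j, ⟪η i, η j⟫ * W i j) := by positivity
    calc 2 * m2 ≤ ∑ i, ∑ j, (Mm i j + Mm j i) ^ 2 := hsym2
      _ = _ := hexp2
      _ ≤ x ^ 2 + m2 ^ 2 := by linarith [hx2, hW2, hcr]
  have hm2x2 : m2 ≤ x ^ 2 := by
    nlinarith [key2, hm2x, hm2nn, hxnn, mul_le_mul_of_nonneg_left hm2x hm2nn,
      mul_le_mul_of_nonneg_right hm2x hxnn]
  have hm2fin : m2 ≤ x ^ 2 * (1 + x) / 2 := by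
    nlinarith [key2, hm2x, hm2nn, hxnn, mul_nonneg hxnn (sub_nonneg.2 hm2x2),
      mul_le_mul_of_nonneg_left hm2x hm2nn]
  -- the matrix T = S - 1 and its Frobenius bound
  have hT : ∀ i j, S i j - (if i = j then (1:ℝ) else 0) = -(∑ k, S i k * Mm k j) := by
    intro i j
    have h1 : ∑ k, S i k * Mm k j = (∑ k, S i k * R k j) - S i j := by
      have hpt : ∀ k, S i k * Mm k j
          = S i k * R k j - (if k = j then S i k else 0) := by
        intro k
        simp only [hMm]
        by_cases h : k = j <;> simp [h] <;> ring
      simp_rw [hpt, Finset.sum_sub_distrib]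
      rw [Finset.sum_ite_eq' Finset.univ j (fun k => S i k)]
      simp
    rw [h1, show (∑ k, S i k * R k j) = (S * R) i j from (Matrix.mul_apply).symm, hSR,
      Matrix.one_apply]
    ring
  have hT2 : ∑ i, ∑ j, (S i j - (if i = j then (1:ℝ) else 0)) ^ 2 ≤ m2 := by
    have hcol : ∀ j, ∑ i, (S i j - (if i = j then (1:ℝ) else 0)) ^ 2 ≤ ∑ k, (Mm k j) ^ 2 := by
      intro j
      have h := hSz (fun k => Mm k j)
      calc ∑ i, (S i j - (if i = j then (1:ℝ) else 0)) ^ 2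
          = ∑ i, (∑ k, S i k * Mm k j) ^ 2 := by
            refine Finset.sum_congr rfl fun i _ => ?_
            rw [hT i j, neg_sq]
        _ ≤ ∑ k, (Mm k j) ^ 2 := h
    calc ∑ i, ∑ j, (S i j - (if i = j then (1:ℝ) else 0)) ^ 2
        = ∑ j, ∑ i, (S i j - (if i = j then (1:ℝ) else 0)) ^ 2 := Finset.sum_comm
      _ ≤ ∑ j, ∑ k, (Mm k j) ^ 2 := Finset.sum_le_sum fun j _ => hcol j
      _ = m2 := by rw [hm2]; exact Finset.sum_comm
  -- expressing q - v through v and T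
  have hqv : ∀ j, q j - v j = ∑ i, (S i j - (if i = j then (1:ℝ) else 0)) • v i := by
    intro j
    have hq_eq : q j = ∑ i, S i j • v i := by
      have hvS : ∑ i, S i j • v i = ∑ k, ((∑ i, R k i * S i j) • q k) := by
        rw [hqR]
        simp only [smulMat]
        calc ∑ i, S i j • (∑ k, R k i • q k)
            = ∑ i, ∑ k, (R k i * S i j) • q k := by
              refine Finset.sum_congr rfl fun i _ => ?_
              rw [Finset.smul_sum]
              refine Finset.sum_congr rfl fun k _ => ?_
              rw [smul_smul, mul_comm]
          _ = ∑ k, ∑ i, (R k i * S i j) • q k := Finset.sum_comm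
          _ = ∑ k, ((∑ i, R k i * S i j) • q k) := by
              refine Finset.sum_congr rfl fun k _ => ?_
              rw [Finset.sum_smul]
      rw [hvS]
      have hd : ∀ k, (∑ i, R k i * S i j) = if k = j then (1:ℝ) else 0 := by
        intro k
        rw [show (∑ i, R k i * S i j) = (R * S) k j from (Matrix.mul_apply).symm, hRS,
          Matrix.one_apply]
      simp_rw [hd, ite_smul, one_smul, zero_smul]
      rw [Finset.sum_ite_eq' Finset.univ j q]
      simp
    have hvj : v j = ∑ i, (if i = j then (1:ℝ) else 0) • v i := by
      simp_rw [ite_smul, one_smul, zero_smul]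
      rw [Finset.sum_ite_eq' Finset.univ j v]
      simp
    calc q j - v j = (∑ i, S i j • v i) - ∑ i, (if i = j then (1:ℝ) else 0) • v i := by
          rw [← hq_eq, ← hvj]
      _ = ∑ i, (S i j - (if i = j then (1:ℝ) else 0)) • v i := by
          rw [← Finset.sum_sub_distrib]
          exact Finset.sum_congr rfl fun i _ => (sub_smul _ _ _).symm
  -- nonnegativity and Cauchy-Schwarz for the bilinear form
  have haA : ∀ u : V, 0 ≤ aForm u u := by
    intro u
    rcases eq_or_ne u 0 with h | h
    · simp [h]
    · exact (hpos u h).le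
  have hCS := bilin_cs aForm hsymm haA
  -- column bound for the a-norm
  have hcolA : ∀ j, aForm (q j - v j) (q j - v j)
      ≤ (∑ i, aForm (v i) (v i)) * ∑ i, (S i j - (if i = j then (1:ℝ) else 0)) ^ 2 := by
    intro j
    have hexp : aForm (q j - v j) (q j - v j)
        = ∑ i, ∑ k, (S i j - (if i = j then (1:ℝ) else 0))
            * (S k j - (if k = j then (1:ℝ) else 0)) * aForm (v i) (v k) := by
      rw [hqv j]
      simp only [map_sum, map_smul, LinearMap.sum_apply, LinearMap.smul_apply, smul_eq_mul]
      simp_rw [Finset.mul_sum]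
      rw [Finset.sum_comm]
      exact Finset.sum_congr rfl fun i _ => Finset.sum_congr rfl fun k _ => by ring
    rw [hexp]
    exact quad_le_trace (fun i k => aForm (v i) (v k)) (fun i k => hCS (v i) (v k))
      (fun i => haA (v i)) (fun i => S i j - (if i = j then (1:ℝ) else 0))
  -- assemble everything
  have hnormH : (normH η) ^ 2 = g := by
    rw [normH, Real.sq_sqrt]
    · rw [hg]; rfl
    · exact Finset.sum_nonneg fun j _ => real_inner_self_nonneg
  have hA : (0:ℝ) ≤ ∑ i, aForm (v i) (v i) := Finset.sum_nonneg fun i _ => haA (v i)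
  have hsum : ∑ j, aForm (q j - v j) (q j - v j) ≤ (∑ i, aForm (v i) (v i)) * m2 := by
    have h1 : ∑ j, aForm (q j - v j) (q j - v j)
        ≤ (∑ i, aForm (v i) (v i)) * ∑ j, ∑ i, (S i j - (if i = j then (1:ℝ) else 0)) ^ 2 := by
      calc ∑ j, aForm (q j - v j) (q j - v j)
          ≤ ∑ j, ((∑ i, aForm (v i) (v i)) * ∑ i, (S i j - (if i = j then (1:ℝ) else 0)) ^ 2) :=
            Finset.sum_le_sum fun j _ => hcolA j
        _ = _ := by rw [← Finset.mul_sum]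
    have h2 : ∑ j, ∑ i, (S i j - (if i = j then (1:ℝ) else 0)) ^ 2 ≤ m2 := by
      calc ∑ j, ∑ i, (S i j - (if i = j then (1:ℝ) else 0)) ^ 2
          = ∑ i, ∑ j, (S i j - (if i = j then (1:ℝ) else 0)) ^ 2 := Finset.sum_comm
        _ ≤ m2 := hT2
    exact h1.trans (mul_le_mul_of_nonneg_left h2 hA)
  have hfin1 : normA aForm (q - v) ≤ Real.sqrt ((∑ i, aForm (v i) (v i)) * m2) := by
    rw [normA]
    apply Real.sqrt_le_sqrt
    simpa [Pi.sub_apply] using hsum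
  have hx1 : (0:ℝ) ≤ 1 + x := by linarith
  have hAm2 : (∑ i, aForm (v i) (v i)) * m2
      ≤ (∑ i, aForm (v i) (v i)) * (x ^ 2 * (1 + x) / 2) :=
    mul_le_mul_of_nonneg_left hm2fin hA
  have heq : Real.sqrt ((∑ i, aForm (v i) (v i)) * (x ^ 2 * (1 + x) / 2))
      = Real.sqrt (∑ i, aForm (v i) (v i)) * (x * Real.sqrt (1 + x) / Real.sqrt 2) := by
    rw [Real.sqrt_mul hA]
    congr 1
    rw [Real.sqrt_div (by positivity : (0:ℝ) ≤ x ^ 2 * (1 + x)) 2,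
      Real.sqrt_mul (sq_nonneg x), Real.sqrt_sq hxnn]
  have hfin2 : Real.sqrt ((∑ i, aForm (v i) (v i)) * m2)
      ≤ Real.sqrt (∑ i, aForm (v i) (v i)) * (x * Real.sqrt (1 + x) / Real.sqrt 2) := by
    rw [← heq]
    exact Real.sqrt_le_sqrt hAm2
  have hnormAv : normA aForm v = Real.sqrt (∑ i, aForm (v i) (v i)) := rfl
  calc normA aForm (q - v)
      ≤ Real.sqrt (∑ i, aForm (v i) (v i)) * (x * Real.sqrt (1 + x) / Real.sqrt 2) :=
        hfin1.trans hfin2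
    _ = t ^ 2 / Real.sqrt 2 * normA aForm v * Real.sqrt (1 + t ^ 2 * (normH η) ^ 2)
          * (normH η) ^ 2 := by
        rw [← hnormAv, hnormH, hx]
        ring
end
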